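/- Let m ≥ 0 and let n ∈ [2^m, 2^{m+1}) with binary digits ε_0,…,ε_{m-1}, ε_m = 1. Let n̂ = 2^m + ∑_{k=0}^{m-1} (1-ε_k) 2^k. Then v(n) + v(n̂) = 2/3. -/
import Mathlib


open Finset

/-- The largest odd divisor of `k`. -/
def oddPart (k : ℕ) : ℕ := ordCompl[2] k

/-- `V n = ∑_{k=1}^n α(k)/k` as a rational number. -/
def V (n : ℕ) : ℚ := ∑ k ∈ Finset.Icc 1 n, (oddPart k : ℚ) / k

/-- `v n = V n - 2n/3`. -/
def v (n : ℕ) : ℚ := V n - 2 * n / 3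

/-- `U n = ∑_{k=1}^n α(k)`. -/
def U (n : ℕ) : ℕ := ∑ k ∈ Finset.Icc 1 n, oddPart k

/-- `G n = ∑_{k=1}^n (n+1-k)·α(k)/k` as a rational number. -/
def G (n : ℕ) : ℚ := ∑ k ∈ Finset.Icc 1 n, ((n : ℚ) + 1 - k) * (oddPart k : ℚ) / k

/-- `g n = n(n+2)/3 - G n`. -/
def g (n : ℕ) : ℚ := n * (n + 2) / 3 - G n

lemma oddPart_two_mul (k : ℕ) : oddPart (2*k) = oddPart k := by
  unfold oddPart
  rw [Nat.ordCompl_mul]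
  simp [Nat.Prime.factorization_self Nat.prime_two]

lemma oddPart_odd (k : ℕ) : oddPart (2*k+1) = 2*k+1 := by
  unfold oddPart
  rw [Nat.factorization_eq_zero_of_not_dvd (by omega)]
  simp

lemma V_succ (n : ℕ) : V (n+1) = V n + (oddPart (n+1) : ℚ) / (n+1) := by
  unfold V
  rw [Finset.sum_Icc_succ_top (by omega)]
  push_cast
  ring

lemma V_two_mul (n : ℕ) : V (2*n) = n + V n / 2 := by
  induction n with
  | zero => simp [V]
  | succ n ih =>
    have h1 : 2*(n+1) = (2*n+1)+1 := by ring
    rw [h1, V_succ, show (2*n+1 : ℕ) = (2*n)+1 from rfl, V_succ, ih, V_succ]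
    rw [show (2*n)+1 = 2*n+1 from rfl, oddPart_odd n,
      show 2*n+1+1 = 2*(n+1) by ring, oddPart_two_mul]
    have a1 : (2*(n:ℚ)+1) ≠ 0 := by positivity
    have a2 : ((n:ℚ)+1) ≠ 0 := by positivity
    push_cast
    field_simp
    ring

lemma v_two_mul (n : ℕ) : v (2*n) = v n / 2 := by
  unfold v; rw [V_two_mul]; push_cast; ring

lemma v_two_mul_add_one (n : ℕ) : v (2*n+1) = v n / 2 + 1/3 := by
  unfold v
  rw [show (2*n+1 : ℕ) = (2*n)+1 from rfl, V_succ, V_two_mul,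
    show (2*n)+1 = 2*n+1 from rfl, oddPart_odd]
  have a1 : (2*(n:ℚ)+1) ≠ 0 := by positivity
  push_cast
  field_simp
  ring

theorem stmt5 (m : ℕ) (ε : ℕ → ℕ) (hε : ∀ k, ε k ≤ 1) (n nhat : ℕ)
    (hn : n = 2 ^ m + ∑ k ∈ Finset.range m, ε k * 2 ^ k)
    (hnhat : nhat = 2 ^ m + ∑ k ∈ Finset.range m, (1 - ε k) * 2 ^ k) :
    v n + v nhat = 2 / 3 := by
  induction m generalizing ε n nhat with
  | zero =>
    simp at hn hnhat
    subst hn hnhat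
    have h1 : v 1 = 1/3 := by norm_num [v, V, oddPart]
    rw [h1]; norm_num
  | succ m ih =>
    set n' : ℕ := 2^m + ∑ k ∈ Finset.range m, ε (k+1) * 2^k with hn'
    set nhat' : ℕ := 2^m + ∑ k ∈ Finset.range m, (1 - ε (k+1)) * 2^k with hnhat'
    have key : ∀ f : ℕ → ℕ, 2^(m+1) + ∑ k ∈ Finset.range (m+1), f k * 2^k
        = 2 * (2^m + ∑ k ∈ Finset.range m, f (k+1) * 2^k) + f 0 := by
      intro f
      rw [Finset.sum_range_succ']
      have : ∑ k ∈ Finset.range m, f (k+1) * 2^(k+1)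
          = 2 * ∑ k ∈ Finset.range m, f (k+1) * 2^k := by
        rw [Finset.mul_sum]
        exact Finset.sum_congr rfl (fun i _ => by ring)
      rw [this]; ring
    have hih := ih (fun k => ε (k+1)) (fun k => hε (k+1)) n' nhat' rfl rfl
    have hne : n = 2 * n' + ε 0 := by rw [hn, key]
    have hnhe : nhat = 2 * nhat' + (1 - ε 0) := by rw [hnhat, key]
    have h0 := hε 0
    interval_cases h : ε 0
    · rw [show (1 - 0 : ℕ) = 1 from rfl] at hnhe
      rw [hne, hnhe]
      simp only [Nat.add_zero]
      rw [v_two_mul, v_two_mul_add_one]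
      linarith
    · rw [show (1 - 1 : ℕ) = 0 from rfl, Nat.add_zero] at hnhe
      rw [hne, hnhe]
      rw [v_two_mul, v_two_mul_add_one]
      linarith
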